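/- arXiv:1203.6286 — 2 statements merged into one kernel-verified Lean document; each statement's English description precedes it below -/
import Mathlib

section
/- Let {φ_t} be a Markov chain on a finite state space S with optimal set S_opt, let d: S → ℝ≥0 be a drift function with d(x) = 0 for x ∈ S_opt, and let G(x) denote the expected hitting time of S_opt from x, assumed finite. If for every non-optimal point x the one-step drift Δ(x) := Σ_{y ∈ S} P(x,y)(d(x) − d(y)) satisfies Δ(x) ≤ 1, then G(x) ≥ d(x) for all x ∈ S. -/
/-!
`f := G - d` is superharmonic off `opt`: the recurrence for `G` contributes `+1` per step while
the drift of `d` is at most `1`. It vanishes on `opt`, so if it were negative somewhere, the set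
where it attains its minimum would avoid `opt` and, by the minimum principle, be closed under
transitions. On a nonempty closed set avoiding `opt` the recurrence for `G` is impossible: at a
minimiser `z` of `G` on that set it gives `G z ≥ 1 + G z`.
-/

open Finset

section MarkovChain

variable {S : Type*} [Fintype S]

def IsAbsorbing (P : S → S → ℝ) (A : Set S) : Prop :=
  ∀ z ∈ A, ∀ y, P z y ≠ 0 → y ∈ A

lemma sum_mul_const_of_sum_eq_one {p : S → ℝ} (hp1 : ∑ y, p y = 1) (c : ℝ) :
    ∑ y, p y * c = c := by
  rw [← sum_mul, hp1, one_mul]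

lemma eq_of_sum_mul_le_of_forall_le {p f : S → ℝ} {m : ℝ} (hp0 : ∀ y, 0 ≤ p y)
    (hp1 : ∑ y, p y = 1) (hm : ∀ y, m ≤ f y) (hsum : ∑ y, p y * f y ≤ m) {y : S}
    (hy : p y ≠ 0) : f y = m := by
  have hnonneg : ∀ y ∈ univ, 0 ≤ p y * (f y - m) :=
    fun y _ ↦ mul_nonneg (hp0 y) (sub_nonneg.mpr (hm y))
  have hzero : ∑ y, p y * (f y - m) = 0 := by
    refine le_antisymm ?_ (sum_nonneg hnonneg)
    simp only [mul_sub, sum_sub_distrib, sum_mul_const_of_sum_eq_one hp1]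
    linarith
  have hy' := (sum_eq_zero_iff_of_nonneg hnonneg).mp hzero y (mem_univ y)
  rcases mul_eq_zero.mp hy' with h | h
  · exact absurd h hy
  · linarith

lemma sum_mul_sub_le_of_drift_le_one {p d G : S → ℝ} {z : S} (hp1 : ∑ y, p y = 1)
    (hGrec : G z = 1 + ∑ y, p y * G y) (hdrift : ∑ y, p y * (d z - d y) ≤ 1) :
    ∑ y, p y * (G y - d y) ≤ G z - d z := by
  simp only [mul_sub, sum_sub_distrib, sum_mul_const_of_sum_eq_one hp1] at hdrift ⊢
  linarith

variable {P : S → S → ℝ} {opt : Set S}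

lemma isAbsorbing_setOf_eq_min {f : S → ℝ} {m : ℝ} (hP0 : ∀ x y, 0 ≤ P x y)
    (hP1 : ∀ x, ∑ y, P x y = 1) (hsuper : ∀ z ∉ opt, ∑ y, P z y * f y ≤ f z)
    (hopt : ∀ z ∈ opt, 0 ≤ f z) (hm : ∀ y, m ≤ f y) (hneg : m < 0) :
    IsAbsorbing P {z | f z = m} := by
  intro z (hz : f z = m) y hy
  have hzopt : z ∉ opt := fun h ↦ by linarith [hopt z h]
  exact eq_of_sum_mul_le_of_forall_le (hP0 z) (hP1 z) hm (hz ▸ hsuper z hzopt) hy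

lemma IsAbsorbing.inter_nonempty_of_hittingTime {A : Set S} {G : S → ℝ}
    (hP0 : ∀ x y, 0 ≤ P x y) (hP1 : ∀ x, ∑ y, P x y = 1)
    (hGrec : ∀ x ∉ opt, G x = 1 + ∑ y, P x y * G y) (hA : IsAbsorbing P A) (hne : A.Nonempty) :
    (A ∩ opt).Nonempty := by
  by_contra hdisj
  obtain ⟨z, hzA, hzmin⟩ := A.exists_min_image G A.toFinite hne
  have hzopt : z ∉ opt := fun h ↦ hdisj ⟨z, hzA, h⟩
  have hle : ∑ y, P z y * G z ≤ ∑ y, P z y * G y := by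
    refine sum_le_sum fun y _ ↦ ?_
    by_cases hy : P z y = 0
    · simp [hy]
    · exact mul_le_mul_of_nonneg_left (hzmin y (hA z hzA y hy)) (hP0 z y)
  rw [sum_mul_const_of_sum_eq_one (hP1 z)] at hle
  linarith [hGrec z hzopt]

end MarkovChain

theorem stmt1_general {S : Type*} [Fintype S]
    (P : S → S → ℝ) (opt : Set S) (d G : S → ℝ)
    (hP0 : ∀ x y, 0 ≤ P x y) (hP1 : ∀ x, ∑ y, P x y = 1)
    (hdopt : ∀ x ∈ opt, d x = 0)
    (hGopt : ∀ x ∈ opt, G x = 0)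
    (hGrec : ∀ x ∉ opt, G x = 1 + ∑ y, P x y * G y)
    (hdrift : ∀ x ∉ opt, ∑ y, P x y * (d x - d y) ≤ 1) :
    ∀ x, d x ≤ G x := by
  intro x
  by_contra! hx
  set f : S → ℝ := fun z ↦ G z - d z
  have hsuper : ∀ z ∉ opt, ∑ y, P z y * f y ≤ f z := fun z hz ↦
    sum_mul_sub_le_of_drift_le_one (hP1 z) (hGrec z hz) (hdrift z hz)
  have hfopt : ∀ z ∈ opt, f z = 0 := fun z hz ↦ by simp [f, hGopt z hz, hdopt z hz]
  have : Nonempty S := ⟨x⟩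
  obtain ⟨x₀, hx₀⟩ := Finite.exists_min f
  have hneg : f x₀ < 0 := (hx₀ x).trans_lt (sub_neg.mpr hx)
  have habs := isAbsorbing_setOf_eq_min hP0 hP1 hsuper (fun z hz ↦ (hfopt z hz).ge) hx₀ hneg
  obtain ⟨z, hzmin, hzopt⟩ := habs.inter_nonempty_of_hittingTime hP0 hP1 hGrec ⟨x₀, rfl⟩
  have hz : f z = f x₀ := hzmin
  linarith [hfopt z hzopt]

/-- Drift analysis lower bound: if the one-step drift with respect to a drift
function `d` (nonnegative, zero on the optimal set) is at most 1 at every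
non-optimal point, then the expected hitting time `G` of the optimal set
satisfies `G x ≥ d x` everywhere.  `G` is characterized as the (finite)
expected first hitting time of `opt`: nonnegative, vanishing on `opt`, and
satisfying the one-step recurrence off `opt`. -/
theorem stmt1 {S : Type*} [Fintype S]
    (P : S → S → ℝ) (opt : Set S) (d G : S → ℝ)
    (hP0 : ∀ x y, 0 ≤ P x y) (hP1 : ∀ x, ∑ y, P x y = 1)
    (hd0 : ∀ x, 0 ≤ d x) (hdopt : ∀ x ∈ opt, d x = 0)
    (hG0 : ∀ x, 0 ≤ G x) (hGopt : ∀ x ∈ opt, G x = 0)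
    (hGrec : ∀ x ∉ opt, G x = 1 + ∑ y, P x y * G y)
    (hdrift : ∀ x ∉ opt, ∑ y, P x y * (d x - d y) ≤ 1) :
    ∀ x, d x ≤ G x :=
  stmt1_general P opt d G hP0 hP1 hdopt hGopt hGrec hdrift
end

section
/- Let an elitist (1+1) EA with fixed mutation kernel P^m(x,y) act on a finite set S, accepting a mutant y from parent x iff f(y) > f(x). Let f and g be two fitness functions on S with the same optimal set S_opt, and let G_f, G_g denote the expected hitting times of S_opt under f and g (both assumed finite). If f satisfies the monotonically increasing condition — for any two non-optimal points x, y with G_f(x) < G_f(y) one has f(x) < f(y) — then G_f(x) ≥ G_g(x) for every x ∈ S. -/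
open Finset

/-- Transition kernel of the strictly elitist (1+1) EA with mutation kernel
`Pm` and fitness `f`: a mutant `y ≠ x` is accepted iff `f y > f x`, otherwise
the EA stays at `x`. -/
noncomputable def eaP {S : Type*} [Fintype S] [DecidableEq S]
    (Pm : S → S → ℝ) (f : S → ℝ) (x y : S) : ℝ :=
  if y = x then 1 - ∑ z, (if f x < f z then Pm x z else 0)
  else if f x < f y then Pm x y else 0

lemma eaP_rowsum {S : Type*} [Fintype S] [DecidableEq S]
    (Pm : S → S → ℝ) (h : S → ℝ) (x : S) : ∑ y, eaP Pm h x y = 1 := by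
  classical
  rw [← Finset.add_sum_erase _ _ (mem_univ x)]
  have h1 : eaP Pm h x x = 1 - ∑ z, (if h x < h z then Pm x z else 0) := by
    simp [eaP]
  have h2 : ∑ y ∈ univ.erase x, eaP Pm h x y
      = ∑ y ∈ univ.erase x, (if h x < h y then Pm x y else 0) := by
    apply Finset.sum_congr rfl
    intro y hy
    simp [eaP, (Finset.mem_erase.mp hy).1]
  have h3 : ∑ y ∈ univ.erase x, (if h x < h y then Pm x y else 0)
      = ∑ y, (if h x < h y then Pm x y else 0) :=
    Finset.sum_erase _ (by simp)
  rw [h1, h2, h3]; ring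

lemma eaP_nonneg {S : Type*} [Fintype S] [DecidableEq S]
    (Pm : S → S → ℝ) (hPm0 : ∀ x y, 0 ≤ Pm x y) (hPm1 : ∀ x, ∑ y, Pm x y = 1)
    (h : S → ℝ) (x y : S) : 0 ≤ eaP Pm h x y := by
  unfold eaP
  split
  · have hle : ∑ z, (if h x < h z then Pm x z else 0) ≤ ∑ z, Pm x z := by
      apply Finset.sum_le_sum
      intro z _
      split
      · exact le_rfl
      · exact hPm0 x z
    rw [hPm1 x] at hle
    linarith
  · split
    · exact hPm0 x y
    · exact le_rfl

lemma eaP_mul_sum {S : Type*} [Fintype S] [DecidableEq S]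
    (Pm : S → S → ℝ) (h V : S → ℝ) (x : S) :
    ∑ y, eaP Pm h x y * V y
      = V x + ∑ y, (if h x < h y then Pm x y else 0) * (V y - V x) := by
  classical
  have e1 : ∀ y, eaP Pm h x y * V y
      = eaP Pm h x y * (V y - V x) + eaP Pm h x y * V x := by
    intro y; ring
  have e2 : ∀ y, eaP Pm h x y * (V y - V x)
      = (if h x < h y then Pm x y else 0) * (V y - V x) := by
    intro y
    by_cases hy : y = x
    · subst hy; simp
    · simp [eaP, hy]
  calc ∑ y, eaP Pm h x y * V y
      = ∑ y, (eaP Pm h x y * (V y - V x) + eaP Pm h x y * V x) := by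
        exact Finset.sum_congr rfl (fun y _ => e1 y)
    _ = ∑ y, eaP Pm h x y * (V y - V x) + (∑ y, eaP Pm h x y) * V x := by
        rw [Finset.sum_add_distrib, Finset.sum_mul]
    _ = ∑ y, (if h x < h y then Pm x y else 0) * (V y - V x) + V x := by
        rw [eaP_rowsum, one_mul]
        congr 1
        exact Finset.sum_congr rfl (fun y _ => e2 y)
    _ = V x + ∑ y, (if h x < h y then Pm x y else 0) * (V y - V x) := by ring

/-- Criterion for the hardest function: if `f` satisfies the monotonically
increasing condition (for non-optimal `x, y`, `G_f x < G_f y` implies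
`f x < f y`), then for any fitness `g` with the same optimal set (the common
set of global maxima), the expected runtime satisfies `G_f x ≥ G_g x`
for every `x`. -/
theorem stmt5 {S : Type*} [Fintype S] [DecidableEq S]
    (Pm : S → S → ℝ) (opt : Set S) (f g Gf Gg : S → ℝ)
    (hPm0 : ∀ x y, 0 ≤ Pm x y) (hPm1 : ∀ x, ∑ y, Pm x y = 1)
    (hne : opt.Nonempty)
    (hoptf : ∀ x, x ∈ opt ↔ ∀ y, f y ≤ f x)
    (hoptg : ∀ x, x ∈ opt ↔ ∀ y, g y ≤ g x)
    (hGf0 : ∀ x, 0 ≤ Gf x) (hGfopt : ∀ x ∈ opt, Gf x = 0)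
    (hGfrec : ∀ x ∉ opt, Gf x = 1 + ∑ y, eaP Pm f x y * Gf y)
    (hGg0 : ∀ x, 0 ≤ Gg x) (hGgopt : ∀ x ∈ opt, Gg x = 0)
    (hGgrec : ∀ x ∉ opt, Gg x = 1 + ∑ y, eaP Pm g x y * Gg y)
    (hmono : ∀ x y, x ∉ opt → y ∉ opt → Gf x < Gf y → f x < f y) :
    ∀ x, Gg x ≤ Gf x := by
  classical
  -- if x is non-optimal and y is optimal, h x < h y for any fitness h with opt as maxima
  have hlt : ∀ (h : S → ℝ), (∀ x, x ∈ opt ↔ ∀ y, h y ≤ h x) →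
      ∀ x ∉ opt, ∀ y ∈ opt, h x < h y := by
    intro h hopt x hx y hy
    have : ¬ ∀ z, h z ≤ h x := fun hc => hx ((hopt x).mpr hc)
    push_neg at this
    obtain ⟨z, hz⟩ := this
    exact lt_of_lt_of_le hz (((hopt y).mp hy) z)
  -- key superharmonicity: Gf is a supersolution of the g-equation
  have key : ∀ x ∉ opt, 1 + ∑ y, eaP Pm g x y * Gf y ≤ Gf x := by
    intro x hx
    have termwise : ∀ y, (if g x < g y then Pm x y else 0) * (Gf y - Gf x)
        ≤ (if f x < f y then Pm x y else 0) * (Gf y - Gf x) := by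
      intro y
      by_cases hy : y ∈ opt
      · rw [if_pos (hlt g hoptg x hx y hy), if_pos (hlt f hoptf x hx y hy)]
      · by_cases hgy : g x < g y <;> by_cases hfy : f x < f y
        · rw [if_pos hgy, if_pos hfy]
        · rw [if_pos hgy, if_neg hfy]
          have hGle : Gf y ≤ Gf x :=
            not_lt.mp (fun hc => hfy (hmono x y hx hy hc))
          have : Pm x y * (Gf y - Gf x) ≤ 0 :=
            mul_nonpos_of_nonneg_of_nonpos (hPm0 x y) (by linarith)
          linarith
        · rw [if_neg hgy, if_pos hfy]
          have hGle : Gf x ≤ Gf y :=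
            not_lt.mp (fun hc => absurd (hmono y x hy hx hc) (lt_asymm hfy))
          have : 0 ≤ Pm x y * (Gf y - Gf x) :=
            mul_nonneg (hPm0 x y) (by linarith)
          linarith
        · rw [if_neg hgy, if_neg hfy]
    have hsum : ∑ y, (if g x < g y then Pm x y else 0) * (Gf y - Gf x)
        ≤ ∑ y, (if f x < f y then Pm x y else 0) * (Gf y - Gf x) :=
      Finset.sum_le_sum (fun y _ => termwise y)
    have hrf := hGfrec x hx
    rw [eaP_mul_sum] at hrf
    rw [eaP_mul_sum]
    linarith
  -- minimum principle for u = Gf - Gg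
  by_contra hcon
  push_neg at hcon
  obtain ⟨x, hxlt⟩ := hcon
  set u : S → ℝ := fun w => Gf w - Gg w with hu
  obtain ⟨z, _, hzmin⟩ := Finset.exists_min_image univ u ⟨x, mem_univ x⟩
  have hz0 : u z < 0 := lt_of_le_of_lt (hzmin x (mem_univ x)) (by simp [hu]; linarith)
  have hnopt : ∀ w, u w = u z → w ∉ opt := by
    intro w hw hwopt
    have h0 : u w = 0 := by simp [hu, hGfopt w hwopt, hGgopt w hwopt]
    linarith
  -- closure of the minimum set under the g-chain
  have hclosed : ∀ w, u w = u z → ∀ y, eaP Pm g w y ≠ 0 → u y = u z := by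
    intro w hw y hy
    have hwopt := hnopt w hw
    have h1 := key w hwopt
    have h2 := hGgrec w hwopt
    have h3 : ∑ y, eaP Pm g w y * u y ≤ u z := by
      have : ∑ y, eaP Pm g w y * u y
          = ∑ y, eaP Pm g w y * Gf y - ∑ y, eaP Pm g w y * Gg y := by
        rw [← Finset.sum_sub_distrib]
        exact Finset.sum_congr rfl (fun y _ => by rw [hu]; ring)
      rw [this, ← hw]
      simp only [hu]
      linarith
    have h4 : ∑ y, eaP Pm g w y * u z ≤ ∑ y, eaP Pm g w y * u y :=
      Finset.sum_le_sum (fun y _ =>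
        mul_le_mul_of_nonneg_left (hzmin y (mem_univ y))
          (eaP_nonneg Pm hPm0 hPm1 g w y))
    have h5 : ∑ y, eaP Pm g w y * u z = u z := by
      rw [← Finset.sum_mul, eaP_rowsum, one_mul]
    have h6 : ∑ y, eaP Pm g w y * u y = u z := le_antisymm h3 (by linarith)
    have h7 : ∑ y, eaP Pm g w y * (u y - u z) = 0 := by
      have : ∑ y, eaP Pm g w y * (u y - u z)
          = ∑ y, eaP Pm g w y * u y - ∑ y, eaP Pm g w y * u z := by
        rw [← Finset.sum_sub_distrib]
        exact Finset.sum_congr rfl (fun y _ => by ring)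
      rw [this, h6, h5, sub_self]
    have h8 := (Finset.sum_eq_zero_iff_of_nonneg (fun y _ =>
      mul_nonneg (eaP_nonneg Pm hPm0 hPm1 g w y)
        (sub_nonneg.mpr (hzmin y (mem_univ y))))).mp h7 y (mem_univ y)
    rcases mul_eq_zero.mp h8 with hc | hc
    · exact absurd hc hy
    · linarith [sub_eq_zero.mp hc]
  -- take the minimizer of Gg over the minimum set of u
  set U : Finset S := univ.filter (fun w => u w = u z) with hU
  have hzU : z ∈ U := by simp [hU]
  obtain ⟨x₀, hx₀U, hx₀min⟩ := Finset.exists_min_image U Gg ⟨z, hzU⟩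
  have hx₀u : u x₀ = u z := (Finset.mem_filter.mp hx₀U).2
  have hx₀opt : x₀ ∉ opt := hnopt x₀ hx₀u
  have hrec := hGgrec x₀ hx₀opt
  have hstep : Gg x₀ ≤ ∑ y, eaP Pm g x₀ y * Gg y := by
    have : ∑ y, eaP Pm g x₀ y * Gg x₀ ≤ ∑ y, eaP Pm g x₀ y * Gg y := by
      apply Finset.sum_le_sum
      intro y _
      by_cases hy : eaP Pm g x₀ y = 0
      · simp [hy]
      · have hyU : y ∈ U := by
          simp only [hU, Finset.mem_filter, mem_univ, true_and]
          exact hclosed x₀ hx₀u y hy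
        exact mul_le_mul_of_nonneg_left (hx₀min y hyU)
          (eaP_nonneg Pm hPm0 hPm1 g x₀ y)
    calc Gg x₀ = ∑ y, eaP Pm g x₀ y * Gg x₀ := by
          rw [← Finset.sum_mul, eaP_rowsum, one_mul]
      _ ≤ _ := this
  linarith
end
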